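/- A finite poset P admits a labeling ε: E(P) → {-1,1} making P ε-consistent if and only if P is parity consistent, i.e., for every x in P all saturated chains in the principal order ideal Λ_x = {y : y ≤ x} from a minimal element to x have length of the same parity. -/

import Mathlib

open Polynomial

variable {P : Type*}

/-- The ε-weight of a chain `x₀ ⋖ x₁ ⋖ ⋯ ⋖ xₙ`, recorded as a list:
the sum `Σ ε(x_{i-1}, x_i)` over consecutive pairs. -/
def chainWeight (ε : P → P → ℤ) (c : List P) : ℤ :=
  ((c.zip c.tail).map fun q => ε q.1 q.2).sum

/-- A (nonempty) saturated chain of the poset `P`, as a list of elements with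
each member covered by the next. -/
def IsSatChain [PartialOrder P] (c : List P) : Prop :=
  c ≠ [] ∧ c.Chain' (· ⋖ ·)

/-- A maximal chain: a saturated chain starting at a minimal element and
ending at a maximal element. -/
def IsMaxChainL [PartialOrder P] (c : List P) : Prop :=
  IsSatChain c ∧ (∀ x ∈ c.head?, IsMin x) ∧ (∀ x ∈ c.getLast?, IsMax x)

/-- A saturated chain starting at a minimal element of `P` and ending at `x`. -/
def IsSatChainFromMinTo [PartialOrder P] (x : P) (c : List P) : Prop :=
  IsSatChain c ∧ (∀ y ∈ c.head?, IsMin y) ∧ c.getLast? = some x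

/-- `ε` takes only the values `1` and `-1` on covering relations. -/
def IsSignLabeling [PartialOrder P] (ε : P → P → ℤ) : Prop :=
  ∀ x y : P, x ⋖ y → ε x y = 1 ∨ ε x y = -1

/-- `P` is `ε`-graded of rank `r`: every maximal chain has ε-weight `r`. -/
def IsEGraded [PartialOrder P] (ε : P → P → ℤ) (r : ℤ) : Prop :=
  ∀ c : List P, IsMaxChainL c → chainWeight ε c = r

/-- A `(P,ε)`-partition: an order-reversing map `σ : P → {1,2,…}` which is
strict on covering relations labeled `-1`. -/
def IsPPartition [PartialOrder P] (ε : P → P → ℤ) (σ : P → ℤ) : Prop :=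
  (∀ x, 1 ≤ σ x) ∧ (∀ x y : P, x ≤ y → σ y ≤ σ x) ∧
  (∀ x y : P, x ⋖ y → ε x y = -1 → σ y < σ x)

/-- `Ω(P,ε;n)`: the number of `(P,ε)`-partitions with largest part at most `n`. -/
noncomputable def OmegaCount [PartialOrder P] (ε : P → P → ℤ) (n : ℕ) : ℕ :=
  Nat.card {σ : P → ℤ // IsPPartition ε σ ∧ ∀ x, σ x ≤ (n : ℤ)}

/-- `P` is `ε`-consistent: for every `x`, all saturated chains from a minimal
element to `x` have the same ε-weight (equivalently, every principal order
ideal `Λ_x` is graded for the restricted labeling). -/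
def IsEConsistent [PartialOrder P] (ε : P → P → ℤ) : Prop :=
  ∀ x : P, ∀ c c' : List P, IsSatChainFromMinTo x c → IsSatChainFromMinTo x c' →
    chainWeight ε c = chainWeight ε c'

/-- `P` is parity consistent: for every `x`, all saturated chains from a
minimal element to `x` have length of the same parity. -/
def ParityConsistent (P : Type*) [PartialOrder P] : Prop :=
  ∀ x : P, ∀ c c' : List P, IsSatChainFromMinTo x c → IsSatChainFromMinTo x c' →
    c.length % 2 = c'.length % 2

/-
A sign labeling makes the ε-weight of a saturated chain congruent to its number of edges
modulo 2, so ε-consistency forces parity consistency. Conversely, if parity is consistent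
then the parity `h x ∈ {0, 1}` of the rank of `x` is well defined and flips along every
covering relation, so `ε x y := h y - h x` is a sign labeling; its chain weights telescope
to `h x - h x₀ = h x` for a chain from a minimal `x₀` to `x`.
-/

section ChainWeight

variable {ε : P → P → ℤ}

@[simp]
lemma chainWeight_singleton (a : P) : chainWeight ε [a] = 0 := rfl

@[simp]
lemma chainWeight_cons_cons (a b : P) (l : List P) :
    chainWeight ε (a :: b :: l) = ε a b + chainWeight ε (b :: l) := by
  simp [chainWeight]

lemma chainWeight_sub_eq (f : P → ℤ) :
    ∀ (a : P) (l : List P),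
      chainWeight (fun x y => f y - f x) (a :: l) =
        f ((a :: l).getLast (List.cons_ne_nil a l)) - f a
  | a, [] => by simp
  | a, b :: l => by
    rw [chainWeight_cons_cons, chainWeight_sub_eq f b l, List.getLast_cons_cons]
    ring

lemma IsSignLabeling.chainWeight_cast_eq_length [PartialOrder P] (hε : IsSignLabeling ε) :
    ∀ (a : P) (l : List P), (a :: l).IsChain (· ⋖ ·) →
      (chainWeight ε (a :: l) : ZMod 2) = l.length
  | a, [], _ => by simp
  | a, b :: l, hc => by
    rw [List.isChain_cons_cons] at hc
    have hab : (ε a b : ZMod 2) = 1 := by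
      rcases hε a b hc.1 with h | h <;> rw [h] <;> decide
    rw [chainWeight_cons_cons, Int.cast_add, hab,
      hε.chainWeight_cast_eq_length b l hc.2, List.length_cons, Nat.cast_succ, add_comm]

end ChainWeight

section SatChain

variable [PartialOrder P]

lemma IsSatChainFromMinTo.concat {x y : P} {c : List P} (hc : IsSatChainFromMinTo x c)
    (hxy : x ⋖ y) : IsSatChainFromMinTo y (c ++ [y]) := by
  obtain ⟨⟨hne, hch⟩, hmin, hlast⟩ := hc
  refine ⟨⟨by simp, ?_⟩, by rwa [List.head?_append_of_ne_nil _ hne], by simp⟩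
  rw [List.Chain', List.isChain_append]
  refine ⟨hch, List.isChain_singleton y, fun a ha b hb => ?_⟩
  rw [hlast, Option.mem_some_iff] at ha
  rw [List.head?_cons, Option.mem_some_iff] at hb
  exact ha ▸ hb ▸ hxy

lemma isSatChainFromMinTo_singleton {x : P} (hx : IsMin x) : IsSatChainFromMinTo x [x] :=
  ⟨⟨List.cons_ne_nil x [], List.isChain_singleton x⟩, by simpa using hx, rfl⟩

lemma exists_isSatChainFromMinTo [WellFoundedLT P] [WellFoundedGT P] (x : P) :
    ∃ c : List P, IsSatChainFromMinTo x c := by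
  induction x using WellFoundedLT.induction with
  | _ x ih =>
    by_cases hx : IsMin x
    · exact ⟨[x], isSatChainFromMinTo_singleton hx⟩
    · obtain ⟨y, hyx⟩ := exists_covBy_of_wellFoundedGT hx
      obtain ⟨c, hc⟩ := ih y hyx.lt
      exact ⟨c ++ [x], hc.concat hyx⟩

lemma IsSignLabeling.parityConsistent {ε : P → P → ℤ} (hε : IsSignLabeling ε)
    (hcons : IsEConsistent ε) : ParityConsistent P := by
  rintro x (_ | ⟨a, l⟩) (_ | ⟨a', l'⟩) hc hc'
  · rfl
  · exact absurd rfl hc.1.1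
  · exact absurd rfl hc'.1.1
  have hl : (l.length : ZMod 2) = l'.length := by
    rw [← hε.chainWeight_cast_eq_length a l hc.1.2,
      ← hε.chainWeight_cast_eq_length a' l' hc'.1.2, hcons x _ _ hc hc']
  rw [ZMod.natCast_eq_natCast_iff'] at hl
  simp only [List.length_cons]
  omega

end SatChain

section RankParity

variable [PartialOrder P] [WellFoundedLT P] [WellFoundedGT P]

/-- The parity of the rank of `x`, read off one chosen saturated chain from a minimal
element to `x` (a chain of length `n` has rank `n - 1`). -/
noncomputable def rankParity (x : P) : ℕ :=
  ((exists_isSatChainFromMinTo x).choose.length + 1) % 2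

lemma rankParity_eq (hpar : ParityConsistent P) {x : P} {c : List P}
    (hc : IsSatChainFromMinTo x c) : rankParity x = (c.length + 1) % 2 := by
  have := hpar x c _ hc (exists_isSatChainFromMinTo x).choose_spec
  rw [rankParity]
  omega

lemma rankParity_of_isMin (hpar : ParityConsistent P) {x : P} (hx : IsMin x) :
    rankParity x = 0 := by
  simp [rankParity_eq hpar (isSatChainFromMinTo_singleton hx)]

lemma isSignLabeling_rankParity_sub (hpar : ParityConsistent P) :
    IsSignLabeling fun x y : P => (rankParity y : ℤ) - rankParity x := by
  intro x y hxy
  obtain ⟨c, hc⟩ := exists_isSatChainFromMinTo x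
  have hx := rankParity_eq hpar hc
  have hy := rankParity_eq hpar (hc.concat hxy)
  rw [List.length_append, List.length_singleton] at hy
  dsimp only
  omega

lemma isEConsistent_rankParity_sub (hpar : ParityConsistent P) :
    IsEConsistent fun x y : P => (rankParity y : ℤ) - rankParity x := by
  suffices h : ∀ x c, IsSatChainFromMinTo x c →
      chainWeight (fun x y : P => (rankParity y : ℤ) - rankParity x) c = rankParity x by
    intro x c c' hc hc'
    rw [h x c hc, h x c' hc']
  rintro x (_ | ⟨a, l⟩) ⟨⟨hne, -⟩, hmin, hlast⟩
  · exact absurd rfl hne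
  rw [List.getLast?_eq_some_getLast (List.cons_ne_nil a l), Option.some_inj] at hlast
  rw [chainWeight_sub_eq, hlast, rankParity_of_isMin hpar (hmin a rfl)]
  simp

end RankParity

theorem econsistent_iff_parity_consistent_general (P : Type*) [PartialOrder P] [Fintype P] :
    (∃ ε : P → P → ℤ, IsSignLabeling ε ∧ IsEConsistent ε) ↔ ParityConsistent P :=
  ⟨fun ⟨_, hε, hcons⟩ => hε.parityConsistent hcons,
    fun hpar => ⟨_, isSignLabeling_rankParity_sub hpar, isEConsistent_rankParity_sub hpar⟩⟩

/-- a finite poset `P` admits a labeling `ε : E(P) → {-1,1}`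
making `P` `ε`-consistent if and only if `P` is parity consistent. -/
theorem econsistent_iff_parity_consistent (P : Type*) [PartialOrder P] [Fintype P] [Nonempty P] :
    (∃ ε : P → P → ℤ, IsSignLabeling ε ∧ IsEConsistent ε) ↔ ParityConsistent P :=
  econsistent_iff_parity_consistent_general P
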